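/- The set F of feasible vectors is closed and convex; F equals the intersection ⋂_{λ ∈ Λ₁} H_λ of the half-spaces H_λ over all λ ∈ Λ₁; and F equals the full image P_c(ℝⁿ) = {P_c(x) : x ∈ ℝⁿ}. -/

import Mathlib

open Matrix Set

noncomputable section

/-- `A` is irreducible: for every nonempty proper subset `α` of the index set,
the submatrix `A[α, αᶜ]` is not the zero matrix. -/
def IsIrred {k : ℕ} (A : Matrix (Fin k) (Fin k) ℝ) : Prop :=
  ∀ α : Finset (Fin k), α.Nonempty → α ≠ Finset.univ → ∃ i ∈ α, ∃ j ∈ αᶜ, A i j ≠ 0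

/-- `A` is a Z-matrix: off-diagonal entries are nonpositive. -/
def IsZmat {k : ℕ} (A : Matrix (Fin k) (Fin k) ℝ) : Prop :=
  ∀ i j, i ≠ j → A i j ≤ 0

/-- `A` is an M-matrix: a Z-matrix all of whose eigenvalues have nonnegative real part. -/
def IsMmat {k : ℕ} (A : Matrix (Fin k) (Fin k) ℝ) : Prop :=
  IsZmat A ∧ ∀ μ ∈ spectrum ℂ (A.map (Complex.ofReal)), 0 ≤ μ.re

/-- `A` is a nonsingular M-matrix: a Z-matrix all of whose eigenvalues have positive real part. -/
def IsNonsingMmat {k : ℕ} (A : Matrix (Fin k) (Fin k) ℝ) : Prop :=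
  IsZmat A ∧ ∀ μ ∈ spectrum ℂ (A.map (Complex.ofReal)), 0 < μ.re

/-- `P_c(x) = [x] Y (V* − x)`. -/
def Pc {k : ℕ} (Y : Matrix (Fin k) (Fin k) ℝ) (Vs : Fin k → ℝ) (x : Fin k → ℝ) : Fin k → ℝ :=
  Matrix.diagonal x *ᵥ (Y *ᵥ (Vs - x))

/-- Jacobian of `P_c` at `x`: `J(x) = [Y(V* − x)] − [x] Y`. -/
def Jmat {k : ℕ} (Y : Matrix (Fin k) (Fin k) ℝ) (Vs : Fin k → ℝ) (x : Fin k → ℝ) :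
    Matrix (Fin k) (Fin k) ℝ :=
  Matrix.diagonal (Y *ᵥ (Vs - x)) - Matrix.diagonal x * Y

/-- long-term voltage stable operating points. -/
def Dset {k : ℕ} (Y : Matrix (Fin k) (Fin k) ℝ) (Vs : Fin k → ℝ) : Set (Fin k → ℝ) :=
  {x | (∀ i, 0 < x i) ∧ IsUnit (Jmat Y Vs x).det ∧ ∀ i j, (Jmat Y Vs x)⁻¹ i j < 0}

/-- feasible power demands. -/
def Fset {k : ℕ} (Y : Matrix (Fin k) (Fin k) ℝ) (Vs : Fin k → ℝ) : Set (Fin k → ℝ) :=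
  {P | ∃ x, (∀ i, 0 < x i) ∧ Pc Y Vs x = P}

/-- `h(λ) = (1/2)([λ] Y + Y [λ])`. -/
def hmat {k : ℕ} (Y : Matrix (Fin k) (Fin k) ℝ) (l : Fin k → ℝ) : Matrix (Fin k) (Fin k) ℝ :=
  (1/2 : ℝ) • (Matrix.diagonal l * Y + Y * Matrix.diagonal l)

/-- `Λ₁ = {λ ∈ Λ : λ > 0, 1ᵀλ = 1}`. -/
def Lam1 {k : ℕ} (Y : Matrix (Fin k) (Fin k) ℝ) : Set (Fin k → ℝ) :=
  {l | (hmat Y l).PosDef ∧ (∀ i, 0 < l i) ∧ ∑ i, l i = 1}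

/-- `φ(λ) = (1/2) h(λ)⁻¹ [λ] I*` where `I* = Y V*`. -/
def phiv {k : ℕ} (Y : Matrix (Fin k) (Fin k) ℝ) (Vs : Fin k → ℝ) (l : Fin k → ℝ) : Fin k → ℝ :=
  (1/2 : ℝ) • ((hmat Y l)⁻¹ *ᵥ (Matrix.diagonal l *ᵥ (Y *ᵥ Vs)))

/-- `‖x‖_{h(λ)}²  = xᵀ h(λ) x`. -/
def qnorm {k : ℕ} (Y : Matrix (Fin k) (Fin k) ℝ) (l x : Fin k → ℝ) : ℝ :=
  x ⬝ᵥ (hmat Y l *ᵥ x)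

/-- The half-space `H_λ`. -/
def Hset {k : ℕ} (Y : Matrix (Fin k) (Fin k) ℝ) (Vs : Fin k → ℝ) (l : Fin k → ℝ) :
    Set (Fin k → ℝ) :=
  {y | l ⬝ᵥ y ≤ qnorm Y l (phiv Y Vs l)}

/-!
Every value `Pc x` lies in each `H_λ`: completing the square in `h(λ)` gives
`λ ⬝ Pc x = ‖φ(λ)‖² - ‖x - φ(λ)‖²`.

Conversely, let `P` lie in every `H_λ` and pick `c > 0` with `P ≤ c`, so that `0` is a
subsolution (`0 ≤ x`, `P - t c ≤ Pc x`) for `t = 1`. Subsolutions form a compact set by coercivity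
of `Y`; let `t` be least in `[0, 1]` admitting one. Its maximal subsolution `x` is an exact,
positive solution, by the sign pattern of the Z-matrix `Y` and irreducibility. The symmetric
Z-matrix `-[x]⁻¹ J(x)` has a Perron eigenvalue `μ` with positive eigenvector `w`, and `μ ≥ 0`, as
otherwise moving along `w` would contradict maximality. If `μ > 0`, `J(x)` is invertible and `t`
can be lowered; if `μ = 0` and `t > 0`, then `λ ∝ w / x` lies in `Λ₁` with `φ(λ) = x`, whence
`λ ⬝ P = λ ⬝ Pc x + t λ ⬝ c > ‖φ(λ)‖²`. So `t = 0`, and closedness and convexity follow from the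
half-space description.
-/

open Filter Topology

section Quadratic

variable {ι : Type*} [Fintype ι]

lemma Matrix.IsSymm.dotProduct_mulVec_comm {M : Matrix ι ι ℝ} (hM : M.IsSymm) (x y : ι → ℝ) :
    x ⬝ᵥ M *ᵥ y = y ⬝ᵥ M *ᵥ x := by
  rw [dotProduct_mulVec, ← mulVec_transpose, hM.eq, dotProduct_comm]

lemma dotProduct_self_pos {x : ι → ℝ} (hx : x ≠ 0) : 0 < x ⬝ᵥ x :=
  (Finset.sum_nonneg fun i _ => mul_self_nonneg (x i)).lt_of_ne' (dotProduct_self_eq_zero.not.2 hx)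

lemma isBounded_setOf_dotProduct_self_le (C : ℝ) :
    Bornology.IsBounded {x : ι → ℝ | x ⬝ᵥ x ≤ C} := by
  refine (Metric.isBounded_iff_subset_closedBall 0).2 ⟨√C, fun x hx => ?_⟩
  rw [mem_closedBall_zero_iff, pi_norm_le_iff_of_nonneg (Real.sqrt_nonneg C)]
  refine fun i => Real.abs_le_sqrt (le_trans ?_ hx)
  rw [sq]
  exact Finset.single_le_sum (fun j _ => mul_self_nonneg (x j)) (Finset.mem_univ i)

lemma exists_rayleigh_min [Nonempty ι] (M : Matrix ι ι ℝ) :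
    ∃ μ : ℝ, (∃ v ≠ 0, v ⬝ᵥ M *ᵥ v = μ * (v ⬝ᵥ v)) ∧ ∀ x, μ * (x ⬝ᵥ x) ≤ x ⬝ᵥ M *ᵥ x := by
  classical
  set S := {x : ι → ℝ | x ⬝ᵥ x = 1}
  have hS : IsCompact S := Metric.isCompact_of_isClosed_isBounded
    (isClosed_eq (by fun_prop) continuous_const)
    ((isBounded_setOf_dotProduct_self_le 1).subset fun x hx => le_of_eq hx)
  obtain ⟨i⟩ := ‹Nonempty ι›
  obtain ⟨v, hv, hmin⟩ := hS.exists_isMinOn ⟨Pi.single i 1, by simp [S]⟩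
    (by fun_prop : Continuous fun x : ι → ℝ => x ⬝ᵥ M *ᵥ x).continuousOn
  refine ⟨v ⬝ᵥ M *ᵥ v, ⟨v, ?_, by rw [hv, mul_one]⟩, fun x => ?_⟩
  · rintro rfl
    simp [S] at hv
  rcases eq_or_ne x 0 with rfl | hx
  · simp
  have hr := dotProduct_self_pos hx
  set c := (√(x ⬝ᵥ x))⁻¹
  have hc : c ^ 2 * (x ⬝ᵥ x) = 1 := by
    rw [inv_pow, Real.sq_sqrt hr.le, inv_mul_cancel₀ hr.ne']
  have hcx : c • x ∈ S := by
    simp only [S, mem_ofPred_eq, dotProduct_smul, smul_dotProduct, smul_eq_mul, ← hc]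
    ring
  have : v ⬝ᵥ M *ᵥ v ≤ (c • x) ⬝ᵥ M *ᵥ (c • x) := hmin hcx
  simp only [mulVec_smul, dotProduct_smul, smul_dotProduct, smul_eq_mul] at this
  calc _ ≤ c * (c * (x ⬝ᵥ M *ᵥ x)) * (x ⬝ᵥ x) := mul_le_mul_of_nonneg_right this hr.le
    _ = x ⬝ᵥ M *ᵥ x := by linear_combination (x ⬝ᵥ M *ᵥ x) * hc

lemma mulVec_eq_smul_of_rayleigh_eq {M : Matrix ι ι ℝ} (hM : M.IsSymm) {μ : ℝ}
    (hμ : ∀ x, μ * (x ⬝ᵥ x) ≤ x ⬝ᵥ M *ᵥ x) {v : ι → ℝ} (hv : v ⬝ᵥ M *ᵥ v = μ * (v ⬝ᵥ v)) :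
    M *ᵥ v = μ • v := by
  classical
  have hB : (M - μ • 1).PosSemidef :=
    .of_dotProduct_mulVec_nonneg (isHermitian_iff_isSymm.2 (hM.sub (isSymm_one.smul μ)))
      fun x => by simpa [sub_mulVec, smul_mulVec] using hμ x
  have := (hB.dotProduct_mulVec_zero_iff v).1 (by simp [sub_mulVec, smul_mulVec, hv])
  rwa [sub_mulVec, smul_mulVec, one_mulVec, sub_eq_zero] at this

lemma posDef_of_rayleigh_pos {M : Matrix ι ι ℝ} (hM : M.IsSymm) {μ : ℝ} (hμ0 : 0 < μ)
    (hμ : ∀ x, μ * (x ⬝ᵥ x) ≤ x ⬝ᵥ M *ᵥ x) : M.PosDef :=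
  .of_dotProduct_mulVec_pos (isHermitian_iff_isSymm.2 hM) fun x hx => by
    simpa using (mul_pos hμ0 (dotProduct_self_pos hx)).trans_le (hμ x)

lemma Matrix.PosDef.exists_rayleigh_pos [Nonempty ι] {M : Matrix ι ι ℝ} (hM : M.PosDef) :
    ∃ m > 0, ∀ x, m * (x ⬝ᵥ x) ≤ x ⬝ᵥ M *ᵥ x := by
  obtain ⟨μ, ⟨v, hv0, hv⟩, hμ⟩ := exists_rayleigh_min M
  refine ⟨μ, pos_of_mul_pos_left ?_ (dotProduct_self_pos hv0).le, hμ⟩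
  simpa [hv] using hM.dotProduct_mulVec_pos hv0

end Quadratic

section Zmatrix

variable {n : ℕ} {A : Matrix (Fin n) (Fin n) ℝ}

lemma IsZmat.mul_apply_nonpos (hA : IsZmat A) {v : Fin n → ℝ} (hv : 0 ≤ v) {i : Fin n}
    (hi : v i = 0) (j : Fin n) : A i j * v j ≤ 0 := by
  rcases eq_or_ne i j with rfl | hij
  · simp [hi]
  · exact mul_nonpos_of_nonpos_of_nonneg (hA i j hij) (hv j)

lemma IsZmat.mulVec_apply_nonpos (hA : IsZmat A) {v : Fin n → ℝ} (hv : 0 ≤ v) {i : Fin n}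
    (hi : v i = 0) : (A *ᵥ v) i ≤ 0 :=
  Finset.sum_nonpos (s := Finset.univ) fun j _ => hA.mul_apply_nonpos hv hi j

lemma IsZmat.eq_zero_of_mulVec_apply_eq_zero (hA : IsZmat A) {v : Fin n → ℝ} (hv : 0 ≤ v)
    {i j : Fin n} (hi : v i = 0) (h : (A *ᵥ v) i = 0) (hij : A i j ≠ 0) : v j = 0 :=
  (mul_eq_zero.1 ((Finset.sum_eq_zero_iff_of_nonpos (s := Finset.univ)
    fun k _ => hA.mul_apply_nonpos hv hi k).1 h j (Finset.mem_univ j))).resolve_left hij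

lemma IsZmat.abs_dotProduct_mulVec_le (hA : IsZmat A) (x : Fin n → ℝ) :
    |x| ⬝ᵥ A *ᵥ |x| ≤ x ⬝ᵥ A *ᵥ x := by
  simp only [dotProduct, mulVec, Finset.mul_sum]
  refine Finset.sum_le_sum fun i _ => Finset.sum_le_sum fun j _ => ?_
  simp only [Pi.abs_apply]
  rcases eq_or_ne i j with rfl | hij
  · rw [mul_left_comm, abs_mul_abs_self, mul_left_comm]
  · rw [mul_left_comm, ← abs_mul, mul_left_comm (x i)]
    exact mul_le_mul_of_nonpos_left (le_abs_self _) (hA i j hij)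

lemma IsZmat.sub_diagonal (hA : IsZmat A) (g : Fin n → ℝ) : IsZmat (A - diagonal g) :=
  fun i j hij => by simpa [hij] using hA i j hij

lemma IsIrred.sub_diagonal (hA : IsIrred A) (g : Fin n → ℝ) : IsIrred (A - diagonal g) := by
  intro α hα hα'
  obtain ⟨i, hi, j, hj, hij⟩ := hA α hα hα'
  have hne : i ≠ j := by
    rintro rfl
    exact Finset.mem_compl.1 hj hi
  exact ⟨i, hi, j, hj, by simpa [hne] using hij⟩

lemma IsIrred.forall_of_propagates (hA : IsIrred A) {p : Fin n → Prop}
    (hp : ∀ i j, p i → A i j ≠ 0 → p j) {i : Fin n} (hi : p i) (j : Fin n) : p j := by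
  classical
  by_contra hj
  obtain ⟨k, hk, l, hl, hkl⟩ := hA (Finset.univ.filter p) ⟨i, by simpa using hi⟩
    fun h => hj (by simpa using Finset.ext_iff.1 h j)
  simp only [Finset.mem_filter, Finset.mem_univ, true_and, Finset.mem_compl] at hk hl
  exact hl (hp k l hk hkl)

theorem exists_perron [Nonempty (Fin n)] (hs : A.IsSymm) (hZ : IsZmat A) (hirr : IsIrred A) :
    ∃ (μ : ℝ) (w : Fin n → ℝ), (∀ i, 0 < w i) ∧ A *ᵥ w = μ • w ∧
      ∀ x, μ * (x ⬝ᵥ x) ≤ x ⬝ᵥ A *ᵥ x := by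
  obtain ⟨μ, ⟨v, hv0, hv⟩, hμ⟩ := exists_rayleigh_min A
  -- `|v|` is again a minimiser since `A` is a Z-matrix, and irreducibility forbids zeros in it
  have habs : |v| ⬝ᵥ |v| = v ⬝ᵥ v :=
    Finset.sum_congr rfl fun i _ => abs_mul_abs_self (v i)
  have heig : A *ᵥ |v| = μ • |v| := mulVec_eq_smul_of_rayleigh_eq hs hμ <|
    le_antisymm (habs ▸ hv ▸ hZ.abs_dotProduct_mulVec_le v) (hμ _)
  refine ⟨μ, |v|, fun j => (abs_nonneg (v j)).lt_of_ne' fun hj => hv0 ?_, heig, hμ⟩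
  have hzero := hirr.forall_of_propagates (p := fun k => |v| k = 0)
    (fun k l hk hkl => hZ.eq_zero_of_mulVec_apply_eq_zero (abs_nonneg v) hk
      (by rw [heig, Pi.smul_apply, hk, smul_zero]) hkl) (i := j) hj
  exact funext fun k => abs_eq_zero.1 (hzero k)

lemma posDef_of_mulVec_nonneg [Nonempty (Fin n)] (hs : A.IsSymm) (hZ : IsZmat A)
    (hirr : IsIrred A) {u : Fin n → ℝ} (hu : ∀ i, 0 < u i) (hAu : 0 ≤ A *ᵥ u)
    (hAu0 : A *ᵥ u ≠ 0) : A.PosDef := by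
  obtain ⟨μ, w, hw, hAw, hμ⟩ := exists_perron hs hZ hirr
  refine posDef_of_rayleigh_pos hs ?_ hμ
  obtain ⟨i, hi⟩ := Function.ne_iff.1 hAu0
  have hwAu : 0 < w ⬝ᵥ A *ᵥ u := Finset.sum_pos' (fun j _ => mul_nonneg (hw j).le (hAu j))
    ⟨i, Finset.mem_univ i, mul_pos (hw i) ((hAu i).lt_of_ne' hi)⟩
  rw [hs.dotProduct_mulVec_comm, hAw, dotProduct_smul, smul_eq_mul] at hwAu
  exact pos_of_mul_pos_left hwAu
    (Finset.sum_nonneg fun j _ => mul_nonneg (hu j).le (hw j).le)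

end Zmatrix

section Subsolutions

variable {n : ℕ} {Y : Matrix (Fin n) (Fin n) ℝ} {Vs : Fin n → ℝ}

lemma pc_eq (Y : Matrix (Fin n) (Fin n) ℝ) (Vs x : Fin n → ℝ) :
    Pc Y Vs x = x * Y *ᵥ (Vs - x) := by
  ext i
  simp [Pc, mulVec_diagonal]

lemma continuous_pc : Continuous (Pc Y Vs) := by
  unfold Pc
  fun_prop

lemma jmat_mulVec (Y : Matrix (Fin n) (Fin n) ℝ) (Vs x d : Fin n → ℝ) :
    Jmat Y Vs x *ᵥ d = d * Y *ᵥ (Vs - x) - x * Y *ᵥ d := by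
  ext i
  simp [Jmat, sub_mulVec, mulVec_diagonal, ← mulVec_mulVec, mul_comm]

lemma pc_add_smul (Y : Matrix (Fin n) (Fin n) ℝ) (Vs x d : Fin n → ℝ) (η : ℝ) :
    Pc Y Vs (x + η • d) = Pc Y Vs x + η • Jmat Y Vs x *ᵥ d - η ^ 2 • (d * Y *ᵥ d) := by
  ext i
  simp only [pc_eq, jmat_mulVec, mulVec_sub, mulVec_add, mulVec_smul, Pi.add_apply,
    Pi.sub_apply, Pi.mul_apply, Pi.smul_apply, smul_eq_mul]
  ring

lemma eventually_lt_pc_add_smul_apply {x d : Fin n → ℝ} {i : Fin n} {c : ℝ}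
    (h : c < (Jmat Y Vs x *ᵥ d) i) :
    ∀ᶠ η in 𝓝[>] (0 : ℝ), Pc Y Vs x i + η * c < Pc Y Vs (x + η • d) i := by
  have hlim : Tendsto (fun η : ℝ => (Jmat Y Vs x *ᵥ d) i - η * (d i * (Y *ᵥ d) i)) (𝓝 0)
      (𝓝 ((Jmat Y Vs x *ᵥ d) i)) := by
    exact (by fun_prop : Continuous _).tendsto' _ _ (by simp)
  filter_upwards [nhdsWithin_le_nhds (hlim.eventually_const_lt h), self_mem_nhdsWithin]
    with η hη (hη0 : 0 < η)
  simp only [pc_add_smul, Pi.add_apply, Pi.sub_apply, Pi.smul_apply, Pi.mul_apply, smul_eq_mul]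
  nlinarith

lemma pc_apply_le_pc_apply (hZ : IsZmat Y) {x y : Fin n → ℝ} (hxy : x ≤ y) {i : Fin n}
    (hi : x i = y i) (hx : 0 ≤ x i) : Pc Y Vs x i ≤ Pc Y Vs y i := by
  have h := hZ.mulVec_apply_nonpos (sub_nonneg.2 hxy) (sub_eq_zero.2 hi.symm)
  have key : (Y *ᵥ (Vs - x)) i ≤ (Y *ᵥ (Vs - y)) i := by
    rw [← sub_nonpos, ← Pi.sub_apply, ← mulVec_sub, sub_sub_sub_cancel_left]
    exact h
  simp only [pc_eq, Pi.mul_apply, ← hi]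
  exact mul_le_mul_of_nonneg_left key hx

def subsolutions (Y : Matrix (Fin n) (Fin n) ℝ) (Vs P : Fin n → ℝ) : Set (Fin n → ℝ) :=
  {x | 0 ≤ x ∧ P ≤ Pc Y Vs x}

lemma subsolutions_antitone : Antitone (subsolutions Y Vs) :=
  fun _ _ hPQ _ hx => ⟨hx.1, hPQ.trans hx.2⟩

lemma isClosed_subsolutions (P : Fin n → ℝ) : IsClosed (subsolutions Y Vs P) :=
  (isClosed_le continuous_const continuous_id).inter (isClosed_le continuous_const continuous_pc)

lemma isCompact_subsolutions [Nonempty (Fin n)] (hPD : Y.PosDef) (P : Fin n → ℝ) :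
    IsCompact (subsolutions Y Vs P) := by
  obtain ⟨m, hm, hY⟩ := hPD.exists_rayleigh_pos
  set I := Y *ᵥ Vs
  refine Metric.isCompact_of_isClosed_isBounded (isClosed_subsolutions P)
    ((isBounded_setOf_dotProduct_self_le ((I ⬝ᵥ I - 2 * m * ∑ i, P i) / m ^ 2)).subset ?_)
  intro x hx
  have hsum : ∑ i, P i ≤ x ⬝ᵥ I - x ⬝ᵥ Y *ᵥ x := by
    rw [← dotProduct_sub, ← mulVec_sub]
    exact Finset.sum_le_sum fun i _ => by simpa [pc_eq] using hx.2 i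
  -- AM-GM: `2 m (x ⬝ I) ≤ m² (x ⬝ x) + I ⬝ I`
  have hsq : 0 ≤ (m • x - I) ⬝ᵥ (m • x - I) := (Finset.sum_nonneg fun i _ => mul_self_nonneg _)
  simp only [dotProduct_sub, sub_dotProduct, dotProduct_smul, smul_dotProduct, smul_eq_mul,
    dotProduct_comm I x] at hsq
  rw [mem_ofPred_eq, le_div_iff₀ (by positivity)]
  nlinarith [hY x]

end Subsolutions

section Maximal

variable {n : ℕ} {Y : Matrix (Fin n) (Fin n) ℝ} {Vs P x : Fin n → ℝ}

lemma exists_le_maximal_subsolutions [Nonempty (Fin n)] (hPD : Y.PosDef) {a : Fin n → ℝ}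
    (ha : a ∈ subsolutions Y Vs P) : ∃ x, a ≤ x ∧ Maximal (· ∈ subsolutions Y Vs P) x := by
  obtain ⟨x, ⟨hx, hax⟩, hmax⟩ :=
    ((isCompact_subsolutions hPD P).inter_right (isClosed_Ici (a := a))).exists_isMaxOn
      ⟨a, ha, mem_Ici.2 le_rfl⟩
      (by fun_prop : Continuous fun x : Fin n → ℝ => ∑ i, x i).continuousOn
  refine ⟨x, hax, hx, fun y hy hxy i => ?_⟩
  by_contra! hi
  exact (hmax ⟨hy, hax.trans hxy⟩ : ∑ i, y i ≤ ∑ i, x i).not_gt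
    (Finset.sum_lt_sum (fun j _ => hxy j) ⟨i, Finset.mem_univ i, hi⟩)

lemma not_eventually_le_pc_add_single (hZ : IsZmat Y)
    (hx : Maximal (· ∈ subsolutions Y Vs P) x) (i : Fin n) :
    ¬ ∀ᶠ η in 𝓝[>] (0 : ℝ), P i ≤ Pc Y Vs (x + η • Pi.single i 1) i := by
  intro h
  obtain ⟨η, hPi, hη : 0 < η⟩ := (h.and self_mem_nhdsWithin).exists
  have hle : x ≤ x + η • Pi.single i 1 :=
    le_add_of_nonneg_right (smul_nonneg hη.le (Pi.single_nonneg.2 zero_le_one))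
  have hmem : x + η • Pi.single i 1 ∈ subsolutions Y Vs P := by
    refine ⟨hx.1.1.trans hle, fun j => ?_⟩
    rcases eq_or_ne j i with rfl | hji
    · exact hPi
    · exact (hx.1.2 j).trans (pc_apply_le_pc_apply hZ hle (by simp [hji]) (hx.1.1 j))
  have := hx.2 hmem hle i
  simp only [Pi.add_apply, Pi.smul_apply, Pi.single_eq_same, smul_eq_mul, mul_one] at this
  linarith

lemma pc_eq_of_maximal (hZ : IsZmat Y) (hx : Maximal (· ∈ subsolutions Y Vs P) x) :
    Pc Y Vs x = P := by
  funext i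
  refine le_antisymm ?_ (hx.1.2 i)
  by_contra! hlt
  refine not_eventually_le_pc_add_single hZ hx i (nhdsWithin_le_nhds ?_)
  have hlim : Tendsto (fun η : ℝ => Pc Y Vs (x + η • Pi.single i 1) i) (𝓝 0)
      (𝓝 (Pc Y Vs x i)) :=
    ((continuous_apply i).comp (continuous_pc.comp (by fun_prop))).tendsto' _ _ (by simp)
  exact (hlim.eventually_const_lt hlt).mono fun _ => le_of_lt

lemma pos_of_maximal (hZ : IsZmat Y) (hirr : IsIrred Y) (hInn : ∀ i, 0 ≤ (Y *ᵥ Vs) i)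
    (hIne : Y *ᵥ Vs ≠ 0) (hx : Maximal (· ∈ subsolutions Y Vs P) x) (i : Fin n) : 0 < x i := by
  -- where `x` vanishes the current `Y (V* - x)` must vanish too, or raising `x` there would help
  have hzero : ∀ j, x j = 0 → (Y *ᵥ Vs) j = 0 ∧ (Y *ᵥ x) j = 0 := by
    intro j hj
    have hc : (Y *ᵥ (Vs - x)) j ≤ 0 := by
      by_contra! hc
      refine not_eventually_le_pc_add_single hZ hx j ?_
      have hJ : 0 < (Jmat Y Vs x *ᵥ Pi.single j 1) j := by
        simpa only [jmat_mulVec, Pi.sub_apply, Pi.mul_apply, Pi.single_eq_same, hj, one_mul,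
          zero_mul, sub_zero] using hc
      filter_upwards [eventually_lt_pc_add_smul_apply hJ] with η hη
      linarith [hx.1.2 j]
    have := hZ.mulVec_apply_nonpos hx.1.1 hj
    rw [mulVec_sub, Pi.sub_apply] at hc
    constructor <;> linarith [hInn j]
  by_contra! hi
  have hall := hirr.forall_of_propagates (p := fun j => x j = 0)
    (fun j k hj hjk => hZ.eq_zero_of_mulVec_apply_eq_zero hx.1.1 hj (hzero j hj).2 hjk)
    (le_antisymm hi (hx.1.1 i))
  exact hIne (funext fun j => (hzero j (hall j)).1)

end Maximal

section Jacobian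

variable {n : ℕ} {Y : Matrix (Fin n) (Fin n) ℝ} {Vs P x : Fin n → ℝ}

/-- `-[x]⁻¹ J(x)`: unlike `J(x)` it is symmetric, so the Perron theory above applies to it. -/
def scaledJmat (Y : Matrix (Fin n) (Fin n) ℝ) (Vs x : Fin n → ℝ) : Matrix (Fin n) (Fin n) ℝ :=
  Y - diagonal fun i => (Y *ᵥ (Vs - x)) i / x i

lemma jmat_mulVec_apply_eq (d : Fin n → ℝ) {i : Fin n} (hx : x i ≠ 0) :
    (Jmat Y Vs x *ᵥ d) i = -(x i * (scaledJmat Y Vs x *ᵥ d) i) := by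
  simp only [jmat_mulVec, scaledJmat, sub_mulVec, Pi.sub_apply, Pi.mul_apply, mulVec_diagonal]
  field_simp
  ring

lemma eigenvalue_nonneg_of_maximal [Nonempty (Fin n)]
    (hx : Maximal (· ∈ subsolutions Y Vs P) x) (hxpos : ∀ i, 0 < x i) {μ : ℝ}
    {w : Fin n → ℝ} (hw : ∀ i, 0 < w i) (hAw : scaledJmat Y Vs x *ᵥ w = μ • w) : 0 ≤ μ := by
  by_contra! hμ
  have hJ (i : Fin n) : 0 < (Jmat Y Vs x *ᵥ w) i := by
    rw [jmat_mulVec_apply_eq w (hxpos i).ne', hAw, Pi.smul_apply, smul_eq_mul]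
    nlinarith [mul_pos (hxpos i) (hw i)]
  obtain ⟨η, hη, hη0 : 0 < η⟩ :=
    ((eventually_all.2 fun i => eventually_lt_pc_add_smul_apply (c := 0) (hJ i)).and
      self_mem_nhdsWithin).exists
  have hle : x ≤ x + η • w := le_add_of_nonneg_right (smul_nonneg hη0.le fun i => (hw i).le)
  obtain ⟨i⟩ := ‹Nonempty (Fin n)›
  have := hx.2 ⟨hx.1.1.trans hle, fun j => (hx.1.2 j).trans (by linarith [hη j])⟩ hle i
  simp only [Pi.add_apply, Pi.smul_apply, smul_eq_mul] at this
  nlinarith [mul_pos hη0 (hw i)]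

lemma eventually_nonempty_subsolutions (hxpos : ∀ i, 0 < x i)
    (hA : (scaledJmat Y Vs x).PosDef) (c : Fin n → ℝ) :
    ∀ᶠ η in 𝓝[>] (0 : ℝ), (subsolutions Y Vs (Pc Y Vs x + η • c)).Nonempty := by
  classical
  obtain ⟨d, hd⟩ := mulVec_surjective_iff_isUnit.2 hA.isUnit fun i => -((c i + 1) / x i)
  have hJ (i : Fin n) : c i < (Jmat Y Vs x *ᵥ d) i := by
    rw [jmat_mulVec_apply_eq d (hxpos i).ne', hd, mul_neg, neg_neg, mul_div_cancel₀ _ (hxpos i).ne']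
    linarith
  have hpos (i : Fin n) : ∀ᶠ η in 𝓝[>] (0 : ℝ), 0 < x i + η * d i :=
    nhdsWithin_le_nhds <| ((by fun_prop : Continuous fun η : ℝ => x i + η * d i).tendsto' 0 _
      (by simp)).eventually_const_lt (hxpos i)
  filter_upwards [eventually_all.2 fun i => eventually_lt_pc_add_smul_apply (hJ i),
    eventually_all.2 hpos] with η h1 h2
  exact ⟨x + η • d, fun i => by simpa using (h2 i).le, fun i => by simpa using (h1 i).le⟩

end Jacobian

section HalfSpaces

variable {n : ℕ} {Y : Matrix (Fin n) (Fin n) ℝ} {Vs l : Fin n → ℝ}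

lemma hmat_apply (Y : Matrix (Fin n) (Fin n) ℝ) (l : Fin n → ℝ) (i j : Fin n) :
    hmat Y l i j = (l i + l j) / 2 * Y i j := by
  simp only [hmat, Matrix.smul_apply, Matrix.add_apply, diagonal_mul, mul_diagonal, smul_eq_mul]
  ring

lemma hmat_mulVec (Y : Matrix (Fin n) (Fin n) ℝ) (l x : Fin n → ℝ) :
    hmat Y l *ᵥ x = (1 / 2 : ℝ) • (l * Y *ᵥ x + Y *ᵥ (l * x)) := by
  have h (v : Fin n → ℝ) : diagonal l *ᵥ v = l * v := funext (mulVec_diagonal l v)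
  rw [hmat, smul_mulVec, add_mulVec, ← mulVec_mulVec, ← mulVec_mulVec, h, h]

lemma isSymm_hmat (hY : Y.IsSymm) (l : Fin n → ℝ) : (hmat Y l).IsSymm := by
  simp only [hmat, IsSymm, transpose_smul, transpose_add, transpose_mul, hY.eq,
    diagonal_transpose, add_comm]

lemma IsZmat.hmat (hZ : IsZmat Y) (hl : 0 ≤ l) : IsZmat (hmat Y l) := by
  intro i j hij
  rw [hmat_apply]
  exact mul_nonpos_of_nonneg_of_nonpos (div_nonneg (add_nonneg (hl i) (hl j)) zero_le_two)
    (hZ i j hij)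

lemma IsIrred.hmat (hirr : IsIrred Y) (hl : ∀ i, 0 < l i) : IsIrred (hmat Y l) := by
  intro α hα hα'
  obtain ⟨i, hi, j, hj, hij⟩ := hirr α hα hα'
  refine ⟨i, hi, j, hj, ?_⟩
  rw [hmat_apply]
  exact mul_ne_zero (by linarith [hl i, hl j]) hij

lemma qnorm_eq (hY : Y.IsSymm) (l x : Fin n → ℝ) : qnorm Y l x = (l * x) ⬝ᵥ Y *ᵥ x := by
  have h : x ⬝ᵥ (l * Y *ᵥ x) = (l * x) ⬝ᵥ Y *ᵥ x := by
    simp only [dotProduct, Pi.mul_apply]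
    exact Finset.sum_congr rfl fun i _ => by ring
  rw [qnorm, hmat_mulVec, dotProduct_smul, dotProduct_add, hY.dotProduct_mulVec_comm x, h,
    smul_eq_mul]
  ring

lemma hmat_mulVec_phiv (hl : (hmat Y l).PosDef) :
    hmat Y l *ᵥ phiv Y Vs l = (1 / 2 : ℝ) • (l * Y *ᵥ Vs) := by
  classical
  rw [phiv, mulVec_smul, mulVec_mulVec, mul_nonsing_inv _ ((isUnit_iff_isUnit_det _).1 hl.isUnit),
    one_mulVec]
  ext i
  simp only [Pi.smul_apply, mulVec_diagonal, Pi.mul_apply]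

lemma phiv_eq_of_hmat_mulVec (hl : (hmat Y l).PosDef) {x : Fin n → ℝ}
    (hx : hmat Y l *ᵥ x = (1 / 2 : ℝ) • (l * Y *ᵥ Vs)) : phiv Y Vs l = x := by
  classical
  exact mulVec_injective_iff_isUnit.2 hl.isUnit ((hmat_mulVec_phiv hl).trans hx.symm)

lemma dotProduct_pc_eq (hY : Y.IsSymm) (hl : (hmat Y l).PosDef) (x : Fin n → ℝ) :
    l ⬝ᵥ Pc Y Vs x = qnorm Y l (phiv Y Vs l) - qnorm Y l (x - phiv Y Vs l) := by
  set φ := phiv Y Vs l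
  have hlin : x ⬝ᵥ hmat Y l *ᵥ φ = (1 / 2) * ((l * x) ⬝ᵥ Y *ᵥ Vs) := by
    rw [hmat_mulVec_phiv hl, dotProduct_smul, smul_eq_mul]
    simp only [dotProduct, Pi.mul_apply]
    exact congrArg _ (Finset.sum_congr rfl fun i _ => by ring)
  have hsq : qnorm Y l (x - φ) = qnorm Y l x - 2 * (x ⬝ᵥ hmat Y l *ᵥ φ) + qnorm Y l φ := by
    simp only [qnorm, mulVec_sub, dotProduct_sub, sub_dotProduct,
      (isSymm_hmat hY l).dotProduct_mulVec_comm φ x]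
    ring
  have hpc : l ⬝ᵥ Pc Y Vs x = (l * x) ⬝ᵥ (Y *ᵥ Vs - Y *ᵥ x) := by
    simp only [pc_eq, mulVec_sub, dotProduct, Pi.mul_apply]
    exact Finset.sum_congr rfl fun i _ => by ring
  rw [hsq, hlin, hpc, qnorm_eq hY l x, dotProduct_sub]
  ring

lemma dotProduct_pc_le (hY : Y.IsSymm) (hl : (hmat Y l).PosDef) (x : Fin n → ℝ) :
    l ⬝ᵥ Pc Y Vs x ≤ qnorm Y l (phiv Y Vs l) := by
  rw [dotProduct_pc_eq hY hl]
  have h := hl.posSemidef.dotProduct_mulVec_nonneg (x - phiv Y Vs l)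
  rw [star_trivial] at h
  exact sub_le_self _ h

lemma dotProduct_pc_phiv (hY : Y.IsSymm) (hl : (hmat Y l).PosDef) :
    l ⬝ᵥ Pc Y Vs (phiv Y Vs l) = qnorm Y l (phiv Y Vs l) := by
  simp [dotProduct_pc_eq hY hl, qnorm]

lemma exists_mem_lam1_phiv_eq [Nonempty (Fin n)] (hY : Y.IsSymm) (hZ : IsZmat Y)
    (hirr : IsIrred Y) (hInn : ∀ i, 0 ≤ (Y *ᵥ Vs) i) (hIne : Y *ᵥ Vs ≠ 0) {x w : Fin n → ℝ}
    (hx : ∀ i, 0 < x i) (hw : ∀ i, 0 < w i) (hAw : scaledJmat Y Vs x *ᵥ w = 0) :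
    ∃ l ∈ Lam1 Y, phiv Y Vs l = x := by
  set σ := ∑ i, w i / x i
  have hσ : 0 < σ := Finset.sum_pos (fun i _ => div_pos (hw i) (hx i)) Finset.univ_nonempty
  set l : Fin n → ℝ := fun i => w i / x i / σ
  have hl (i : Fin n) : 0 < l i := div_pos (div_pos (hw i) (hx i)) hσ
  have hlx : hmat Y l *ᵥ x = (1 / 2 : ℝ) • (l * Y *ᵥ Vs) := by
    have hlx' : l * x = σ⁻¹ • w := by
      ext i
      simp only [l, Pi.mul_apply, Pi.smul_apply, smul_eq_mul]
      field_simp [(hx i).ne']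
    ext i
    have hAwi := congrFun hAw i
    simp only [scaledJmat, sub_mulVec, Pi.sub_apply, mulVec_diagonal, Pi.zero_apply] at hAwi
    simp only [hmat_mulVec, hlx', mulVec_smul, mulVec_sub, Pi.smul_apply, Pi.add_apply,
      Pi.mul_apply, Pi.sub_apply, smul_eq_mul, l] at hAwi ⊢
    field_simp [(hx i).ne'] at hAwi ⊢
    linear_combination hAwi
  have hpd : (hmat Y l).PosDef := by
    refine posDef_of_mulVec_nonneg (isSymm_hmat hY l) (hZ.hmat fun i => (hl i).le)
      (hirr.hmat hl) hx ?_ ?_ <;> rw [hlx]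
    · exact fun i => by simpa using mul_nonneg (hl i).le (hInn i)
    · obtain ⟨i, hi⟩ := Function.ne_iff.1 hIne
      exact Function.ne_iff.2 ⟨i, by simpa using ⟨(hl i).ne', hi⟩⟩
  refine ⟨l, ⟨hpd, hl, ?_⟩, phiv_eq_of_hmat_mulVec hpd hlx⟩
  simp only [l, ← Finset.sum_div]
  exact div_self hσ.ne'

end HalfSpaces

section Feasibility

variable {n : ℕ} {Y : Matrix (Fin n) (Fin n) ℝ} {Vs : Fin n → ℝ}

lemma range_pc_subset_iInter_hset (hY : Y.IsSymm) :
    range (Pc Y Vs) ⊆ ⋂ l ∈ Lam1 Y, Hset Y Vs l := by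
  rintro _ ⟨x, rfl⟩
  exact mem_iInter₂.2 fun l hl => dotProduct_pc_le hY hl.1 x

lemma isCompact_continuation [Nonempty (Fin n)] (hPD : Y.PosDef) (P : Fin n → ℝ)
    {c : Fin n → ℝ} (hc : 0 ≤ c) :
    IsCompact {p : ℝ × (Fin n → ℝ) | p.1 ∈ Icc 0 1 ∧ p.2 ∈ subsolutions Y Vs (P - p.1 • c)} := by
  refine ((isCompact_Icc (a := (0 : ℝ)) (b := 1)).prod
    (isCompact_subsolutions (Vs := Vs) hPD (P - c))).of_isClosed_subset ?_ ?_
  · exact (isClosed_Icc.preimage continuous_fst).inter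
      ((isClosed_le continuous_const continuous_snd).inter
        (isClosed_le (by fun_prop) (continuous_pc.comp continuous_snd)))
  · rintro ⟨t, a⟩ ⟨ht, ha⟩
    exact ⟨ht, subsolutions_antitone (sub_le_sub_left (smul_le_of_le_one_left hc ht.2) P) ha⟩

lemma exists_lt_nonempty_subsolutions [Nonempty (Fin n)] (hPD : Y.PosDef) (hZ : IsZmat Y)
    (hirr : IsIrred Y) (hInn : ∀ i, 0 ≤ (Y *ᵥ Vs) i) (hIne : Y *ᵥ Vs ≠ 0) {P c : Fin n → ℝ}
    (hP : ∀ l ∈ Lam1 Y, P ∈ Hset Y Vs l) (hc : ∀ i, 0 < c i) {t : ℝ} (ht : 0 < t)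
    (hne : (subsolutions Y Vs (P - t • c)).Nonempty) :
    ∃ s ∈ Ico 0 t, (subsolutions Y Vs (P - s • c)).Nonempty := by
  have hY : Y.IsSymm := isHermitian_iff_isSymm.1 hPD.isHermitian
  obtain ⟨x, -, hx⟩ := exists_le_maximal_subsolutions hPD hne.some_mem
  have hxpos := pos_of_maximal hZ hirr hInn hIne hx
  have hPx : Pc Y Vs x = P - t • c := pc_eq_of_maximal hZ hx
  have hAs : (scaledJmat Y Vs x).IsSymm := hY.sub (isSymm_diagonal _)
  obtain ⟨μ, w, hw, hAw, hμ⟩ := exists_perron hAs (hZ.sub_diagonal _) (hirr.sub_diagonal _)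
  rcases (eigenvalue_nonneg_of_maximal hx hxpos hw hAw).eq_or_lt with rfl | hμ0
  · obtain ⟨l, hl, hφ⟩ :=
      exists_mem_lam1_phiv_eq hY hZ hirr hInn hIne hxpos hw (by simpa using hAw)
    have hlP := hP l hl
    rw [Hset, mem_ofPred_eq, ← dotProduct_pc_phiv hY hl.1, hφ, hPx, dotProduct_sub,
      dotProduct_smul, smul_eq_mul] at hlP
    have : 0 < l ⬝ᵥ c := Finset.sum_pos (fun i _ => mul_pos (hl.2.1 i) (hc i)) Finset.univ_nonempty
    nlinarith
  · obtain ⟨η, hb, hη⟩ := ((eventually_nonempty_subsolutions hxpos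
      (posDef_of_rayleigh_pos hAs hμ0 hμ) c).and (Ioo_mem_nhdsGT ht)).exists
    refine ⟨t - η, ⟨by linarith [hη.2], by linarith [hη.1]⟩, ?_⟩
    convert hb using 2
    rw [hPx, sub_smul]
    abel

theorem iInter_hset_subset_fset [Nonempty (Fin n)] (hPD : Y.PosDef) (hZ : IsZmat Y)
    (hirr : IsIrred Y) (hInn : ∀ i, 0 ≤ (Y *ᵥ Vs) i) (hIne : Y *ᵥ Vs ≠ 0) :
    ⋂ l ∈ Lam1 Y, Hset Y Vs l ⊆ Fset Y Vs := by
  intro P hP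
  simp only [mem_iInter₂] at hP
  set c : Fin n → ℝ := fun i => |P i| + 1
  have hc (i : Fin n) : 0 < c i := by positivity
  have h1 : (1 : ℝ) • c ≥ P := fun i => by simp [c, (le_abs_self (P i)).trans (lt_add_one _).le]
  obtain ⟨⟨t, a⟩, ⟨ht, ha⟩, hmin⟩ :=
    (isCompact_continuation hPD P fun i => (hc i).le).exists_isMinOn
      ⟨(1, 0), ⟨right_mem_Icc.2 zero_le_one, le_rfl, by simpa [pc_eq] using h1⟩⟩
      continuous_fst.continuousOn
  dsimp only at ht ha
  rcases ht.1.eq_or_lt with rfl | ht0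
  · obtain ⟨x, -, hx⟩ := exists_le_maximal_subsolutions hPD (by simpa using ha)
    exact ⟨x, pos_of_maximal hZ hirr hInn hIne hx, pc_eq_of_maximal hZ hx⟩
  obtain ⟨s, hs, b, hb⟩ :=
    exists_lt_nonempty_subsolutions hPD hZ hirr hInn hIne hP hc ht0 ⟨a, ha⟩
  have : t ≤ s := hmin (show (s, b) ∈ _ from ⟨⟨hs.1, hs.2.le.trans ht.2⟩, hb⟩)
  exact (this.not_gt hs.2).elim

end Feasibility

theorem stmt_17_general (n : ℕ)
    (Y : Matrix (Fin n) (Fin n) ℝ)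
    (hPD : Y.PosDef)
    (hZ : IsZmat Y)
    (hirr : IsIrred Y)
    (Vs : Fin n → ℝ)
    (hInn : ∀ i, 0 ≤ (Y *ᵥ Vs) i) (hIne : Y *ᵥ Vs ≠ 0) :
    IsClosed (Fset Y Vs) ∧
    Convex ℝ (Fset Y Vs) ∧
    Fset Y Vs = ⋂ l ∈ Lam1 Y, Hset Y Vs l ∧
    Fset Y Vs = Set.range (Pc Y Vs) := by
  have : Nonempty (Fin n) := by
    by_contra h
    have : IsEmpty (Fin n) := not_nonempty_iff.1 h
    exact hIne (Subsingleton.elim _ _)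
  have hRH := range_pc_subset_iInter_hset (Vs := Vs) (isHermitian_iff_isSymm.1 hPD.isHermitian)
  have hHF := iInter_hset_subset_fset hPD hZ hirr hInn hIne
  have hFR : Fset Y Vs ⊆ range (Pc Y Vs) := fun _ ⟨x, _, hx⟩ => ⟨x, hx⟩
  have hF : Fset Y Vs = ⋂ l ∈ Lam1 Y, Hset Y Vs l := (hFR.trans hRH).antisymm hHF
  refine ⟨hF ▸ isClosed_biInter fun l _ => isClosed_le (by fun_prop) continuous_const,
    hF ▸ convex_iInter₂ fun l _ => convex_halfSpace_le ⟨dotProduct_add l, fun r x =>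
      dotProduct_smul r l x⟩ _, hF, hFR.antisymm (hRH.trans hHF)⟩

theorem stmt_17 (n : ℕ) (hn : 1 ≤ n)
    (Y : Matrix (Fin n) (Fin n) ℝ)
    (hPD : Y.PosDef)
    (hZ : IsZmat Y)
    (hirr : IsIrred Y)
    (Vs : Fin n → ℝ) (hVs : ∀ i, 0 < Vs i)
    (hInn : ∀ i, 0 ≤ (Y *ᵥ Vs) i) (hIne : Y *ᵥ Vs ≠ 0) :
    IsClosed (Fset Y Vs) ∧
    Convex ℝ (Fset Y Vs) ∧
    Fset Y Vs = ⋂ l ∈ Lam1 Y, Hset Y Vs l ∧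
    Fset Y Vs = Set.range (Pc Y Vs) :=
  stmt_17_general n Y hPD hZ hirr Vs hInn hIne
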